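/- Let G be a finite simple graph with maximum degree Δ and let v_i be a vertex of degree d_i ≥ 1 that is not contained in any quadrangle (cycle of length 4) of G. Then E_G(v_i) ≥ √(d_i) · √(d_i/(d_i + Δ − 1)). -/

import Mathlib

/-!
Let `B = |A|`, a positive semidefinite matrix with `B² = A²`. Cauchy–Schwarz for the form
`⟨x, B^k y⟩` makes the diagonal moments `m_k = (B^k)ᵢᵢ` log-convex, whence `m₂³ ≤ m₁² m₄`.
Here `m₁ = E_G(vᵢ)`, `m₂ = (A²)ᵢᵢ = dᵢ` and `m₄ = ∑ⱼ (A²)ᵢⱼ²`. Without quadrangles through `vᵢ`,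
two vertices `j ≠ i` share at most one neighbour, so `(A²)ᵢⱼ ≤ 1` and
`m₄ ≤ dᵢ² + ∑_{j ≠ i} (A²)ᵢⱼ ≤ dᵢ² + dᵢΔ - dᵢ`.
-/

open Matrix Finset

/-- The energy of the vertex `i` of a finite simple graph `G`:
the `(i,i)` entry of `|A| = (A Aᴴ)^{1/2}`, where `A` is the adjacency matrix. -/
noncomputable def vertexEnergy {n : ℕ} (G : SimpleGraph (Fin n)) [DecidableRel G.Adj]
    (i : Fin n) : ℝ :=
  ((Matrix.posSemidef_self_mul_conjTranspose (G.adjMatrix ℝ)).1.eigenvectorUnitary.1 *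
    diagonal ((RCLike.ofReal : ℝ → ℝ) ∘ Real.sqrt ∘ (Matrix.posSemidef_self_mul_conjTranspose (G.adjMatrix ℝ)).1.eigenvalues) *
    (star (Matrix.posSemidef_self_mul_conjTranspose (G.adjMatrix ℝ)).1.eigenvectorUnitary : Matrix (Fin n) (Fin n) ℝ)) i i

namespace Matrix.PosSemidef

variable {ι R : Type*} [Fintype ι] [DecidableEq ι]
  [CommRing R] [LinearOrder R] [IsStrictOrderedRing R] [StarRing R] [TrivialStar R]
  {M : Matrix ι ι R}

theorem dotProduct_mulVec_sq_le (hM : M.PosSemidef) (x y : ι → R) :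
    (x ⬝ᵥ M *ᵥ y) ^ 2 ≤ (x ⬝ᵥ M *ᵥ x) * (y ⬝ᵥ M *ᵥ y) := by
  simpa only [toBilin'_apply'] using (toBilin' M).apply_sq_le_of_symm
    (fun z ↦ by simpa only [toBilin'_apply', star_trivial] using hM.dotProduct_mulVec_nonneg z)
    (LinearMap.BilinForm.isSymm_iff.mp <| isSymm_toBilin'_iff_isSymm.mpr <|
      isHermitian_iff_isSymm.mp hM.isHermitian) x y

variable [StarOrderedRing R]

theorem pow_succ_apply_sq_le (hM : M.PosSemidef) (k : ℕ) (i : ι) :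
    ((M ^ (k + 1)) i i) ^ 2 ≤ (M ^ k) i i * (M ^ (k + 2)) i i := by
  have hsymm : Mᵀ = M := isHermitian_iff_isSymm.mp hM.isHermitian
  have hmove : ∀ (N : Matrix ι ι R) (x y : ι → R), (M *ᵥ x) ⬝ᵥ N *ᵥ y = x ⬝ᵥ (M * N) *ᵥ y := by
    intro N x y
    rw [← mulVec_mulVec, dotProduct_mulVec x, ← mulVec_transpose, hsymm]
  have h := (hM.pow k).dotProduct_mulVec_sq_le (Pi.single i 1) (M *ᵥ Pi.single i 1)
  rw [hmove, mulVec_mulVec, mulVec_mulVec] at h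
  simp only [single_one_dotProduct, mulVec_single_one, col_apply] at h
  rwa [← pow_succ, ← pow_succ', ← pow_succ] at h

theorem sq_apply_pow_three_le (hM : M.PosSemidef) (i : ι) :
    ((M ^ 2) i i) ^ 3 ≤ (M i i) ^ 2 * (M ^ 4) i i := by
  have h₁ : ((M ^ 2) i i) ^ 2 ≤ M i i * (M ^ 3) i i := by
    simpa using hM.pow_succ_apply_sq_le 1 i
  have h₂ : ((M ^ 3) i i) ^ 2 ≤ (M ^ 2) i i * (M ^ 4) i i := hM.pow_succ_apply_sq_le 2 i
  rcases (hM.pow 2).diag_nonneg.eq_or_lt with h₀ | h₀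
  · rw [← h₀, zero_pow three_ne_zero]
    exact mul_nonneg (sq_nonneg _) (hM.pow 4).diag_nonneg
  have h₄ : ((M ^ 2) i i) ^ 4 ≤ (M i i) ^ 2 * ((M ^ 2) i i * (M ^ 4) i i) :=
    calc ((M ^ 2) i i) ^ 4 = (((M ^ 2) i i) ^ 2) ^ 2 := by ring
      _ ≤ (M i i * (M ^ 3) i i) ^ 2 := pow_le_pow_left₀ (sq_nonneg _) h₁ 2
      _ = (M i i) ^ 2 * ((M ^ 3) i i) ^ 2 := by ring
      _ ≤ _ := mul_le_mul_of_nonneg_left h₂ (sq_nonneg _)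
  nlinarith

end Matrix.PosSemidef

namespace SimpleGraph

variable {V : Type*} [Fintype V] [DecidableEq V] (G : SimpleGraph V) [DecidableRel G.Adj]

def InQuadrangle (i : V) : Prop :=
  ∃ j k l, G.Adj i j ∧ G.Adj j k ∧ G.Adj k l ∧ G.Adj l i ∧ k ≠ i ∧ l ≠ j

variable {G}

theorem adjMatrix_pow_four_apply_self {R : Type*} [CommSemiring R] (i : V) :
    (G.adjMatrix R ^ 4) i i = ∑ j, ((G.adjMatrix R ^ 2) i j) ^ 2 := by
  have hsymm := (G.isSymm_adjMatrix (α := R)).pow 2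
  rw [show 4 = 2 + 2 from rfl, pow_add, mul_apply]
  exact sum_congr rfl fun j _ ↦ by rw [hsymm.apply i j, ← sq]

variable {R : Type*} [CommRing R] [LinearOrder R] [IsStrictOrderedRing R]

theorem adjMatrix_sq_apply_nonneg (i j : V) : 0 ≤ (G.adjMatrix R ^ 2) i j := by
  rw [adjMatrix_pow_apply_eq_card_walk]
  positivity

theorem adjMatrix_sq_apply_le_one {i j : V} (hi : ¬ G.InQuadrangle i) (hji : j ≠ i) :
    (G.adjMatrix R ^ 2) i j ≤ 1 := by
  have hcommon : #{u ∈ G.neighborFinset i | G.Adj u j} ≤ 1 := by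
    refine card_le_one.mpr fun u hu w hw ↦ by_contra fun huw ↦ hi ?_
    simp only [mem_filter, mem_neighborFinset] at hu hw
    exact ⟨u, j, w, hu.1, hu.2, hw.2.symm, hw.1.symm, hji, Ne.symm huw⟩
  rw [sq, adjMatrix_mul_apply]
  simp only [adjMatrix_apply, sum_boole]
  exact_mod_cast hcommon

theorem sum_adjMatrix_sq_apply_le (i : V) :
    ∑ j, (G.adjMatrix R ^ 2) i j ≤ G.degree i * G.maxDegree := by
  have hrow : ∀ u, ∑ j, G.adjMatrix R u j = G.degree u := fun u ↦ by
    simpa [mulVec, dotProduct] using adjMatrix_mulVec_const_apply (α := R) (a := 1) (v := u)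
  calc ∑ j, (G.adjMatrix R ^ 2) i j = ∑ u ∈ G.neighborFinset i, (G.degree u : R) := by
        simp only [sq, adjMatrix_mul_apply]
        rw [sum_comm]
        simp only [hrow]
    _ ≤ ∑ u ∈ G.neighborFinset i, (G.maxDegree : R) :=
        sum_le_sum fun u _ ↦ by exact_mod_cast G.degree_le_maxDegree u
    _ = G.degree i * G.maxDegree := by simp

theorem adjMatrix_pow_four_apply_self_le {i : V} (hi : ¬ G.InQuadrangle i) :
    (G.adjMatrix R ^ 4) i i ≤ G.degree i * (G.degree i + G.maxDegree - 1) := by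
  have hdiag : (G.adjMatrix R ^ 2) i i = G.degree i := by
    rw [sq, adjMatrix_mul_self_apply_self]
  have hoff : ∑ j ∈ univ.erase i, ((G.adjMatrix R ^ 2) i j) ^ 2 ≤
      ∑ j ∈ univ.erase i, (G.adjMatrix R ^ 2) i j :=
    sum_le_sum fun j hj ↦ pow_le_of_le_one (adjMatrix_sq_apply_nonneg i j)
      (adjMatrix_sq_apply_le_one hi (ne_of_mem_erase hj)) two_ne_zero
  have hrow := sum_adjMatrix_sq_apply_le (G := G) (R := R) i
  rw [← add_sum_erase _ _ (mem_univ i), hdiag] at hrow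
  rw [adjMatrix_pow_four_apply_self, ← add_sum_erase _ _ (mem_univ i), hdiag]
  linarith

end SimpleGraph

open scoped MatrixOrder

theorem vertexEnergy_eq_sqrt_adjMatrix_sq_apply {n : ℕ} (G : SimpleGraph (Fin n))
    [DecidableRel G.Adj] (i : Fin n) :
    vertexEnergy G i = CFC.sqrt (G.adjMatrix ℝ ^ 2) i i := by
  have hP := posSemidef_self_mul_conjTranspose (G.adjMatrix ℝ)
  rw [sq]
  nth_rw 2 [← (G.isHermitian_adjMatrix ℝ).eq]
  rw [CFC.sqrt_eq_real_sqrt _ hP.nonneg, cfcₙ_eq_cfc, hP.1.cfc_eq]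
  rfl

theorem Real.sqrt_mul_sqrt_div_le_of_pow_three_le {d D e : ℝ} (hd : 0 < d) (hD : 0 < D)
    (he : 0 ≤ e) (h : d ^ 3 ≤ e ^ 2 * (d * D)) : √d * √(d / D) ≤ e := by
  rw [← Real.sqrt_mul hd.le, Real.sqrt_le_left he, ← mul_div_assoc, div_le_iff₀ hD]
  nlinarith

theorem stmt_7 {n : ℕ} (G : SimpleGraph (Fin n)) [DecidableRel G.Adj]
    (i : Fin n) (hd : 1 ≤ G.degree i)
    (hquad : ¬ ∃ j k l : Fin n,
      G.Adj i j ∧ G.Adj j k ∧ G.Adj k l ∧ G.Adj l i ∧ k ≠ i ∧ l ≠ j) :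
    Real.sqrt (G.degree i) *
      Real.sqrt ((G.degree i : ℝ) / ((G.degree i : ℝ) + (G.maxDegree : ℝ) - 1)) ≤
      vertexEnergy G i := by
  set A := G.adjMatrix ℝ
  set B := CFC.sqrt (A ^ 2)
  have hB : B.PosSemidef := (CFC.sqrt_nonneg _).posSemidef
  have hBA : B ^ 2 = A ^ 2 := CFC.sq_sqrt _ (IsSelfAdjoint.sq_nonneg (G.isHermitian_adjMatrix ℝ))
  have hm₁ : vertexEnergy G i = B i i := vertexEnergy_eq_sqrt_adjMatrix_sq_apply G i
  have hm₂ : (B ^ 2) i i = G.degree i := by rw [hBA, sq, G.adjMatrix_mul_self_apply_self]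
  have hm₄ : (B ^ 4) i i = (A ^ 4) i i := by
    rw [show 4 = 2 * 2 from rfl, pow_mul, hBA, ← pow_mul]
  have hmoments := hB.sq_apply_pow_three_le i
  rw [hm₂, hm₄] at hmoments
  have hd₁ : (1 : ℝ) ≤ G.degree i := by exact_mod_cast hd
  have hΔ : (G.degree i : ℝ) ≤ G.maxDegree := by exact_mod_cast G.degree_le_maxDegree i
  rw [hm₁]
  refine Real.sqrt_mul_sqrt_div_le_of_pow_three_le (by linarith) (by linarith) hB.diag_nonneg ?_
  exact hmoments.trans <|
    mul_le_mul_of_nonneg_left (G.adjMatrix_pow_four_apply_self_le hquad) (sq_nonneg _)
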